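/- arXiv:2411.12082 — 5 statements merged into one kernel-verified Lean document; each statement's English description precedes it below -/
import Mathlib

section
/- Let n ≥ 2, k ≥ 1, p ∈ [1,∞], and let X : Fin n → Fin k → ℝ. Then there exists a column y : Fin n → ℝ such that, letting X' : Fin n → Fin (k+1) → ℝ agree with X on the first k columns and have last column y, the robustness satisfies ROB⁺(p,X,X') ≤ n / NEAR(p,X). -/
open scoped ENNReal NNReal

/-- The `ℓ^p` distance matrix of `X : Fin n → Fin k → ℝ`: the `(i,j)` entry is the
`ℓ^p` distance between rows `X i` and `X j`. -/
noncomputable def distMat {n k : ℕ} (p : ℝ≥0∞) (X : Fin n → Fin k → ℝ) :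
    Matrix (Fin n) (Fin n) ℝ :=
  fun i j =>
    if p = ⊤ then ((Finset.univ.sup fun t => Real.nnabs (X j t - X i t)) : ℝ≥0)
    else (∑ t, |X j t - X i t| ^ p.toReal) ^ (1 / p.toReal)

/-- The set of `p`-nearest neighbors of row `i` of `X`. -/
def nearSet {n k : ℕ} (p : ℝ≥0∞) (X : Fin n → Fin k → ℝ) (i : Fin n) : Set (Fin n) :=
  {j | j ≠ i ∧ ∀ j' : Fin n, j' ≠ i → distMat p X i j ≤ distMat p X i j'}

/-- `NEAR(p,X)`: the total number of nearest-neighbor pairs. -/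
noncomputable def NEARcount {n k : ℕ} (p : ℝ≥0∞) (X : Fin n → Fin k → ℝ) : ℕ :=
  ∑ i, (nearSet p X i).ncard

/-- `ROB⁺(p,X,X')`: the proportion of nearest neighbors preserved in passing
from `X` to the one-column extension `X'`. -/
noncomputable def robPlus {n k : ℕ} (p : ℝ≥0∞) (X : Fin n → Fin k → ℝ)
    (X' : Fin n → Fin (k + 1) → ℝ) : ℝ :=
  (∑ i, ((nearSet p X i ∩ nearSet p X' i).ncard : ℝ)) / (NEARcount p X : ℝ)

/- ### Auxiliary lemmas -/

private lemma aux_three_pow_inj {a b : ℕ} (h : (3:ℝ)^a = 3^b) : a = b := by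
  by_contra hne
  rcases Nat.lt_or_ge a b with hlt | hge
  · have := pow_lt_pow_right₀ (by norm_num : (1:ℝ) < 3) hlt
    linarith
  · have := pow_lt_pow_right₀ (by norm_num : (1:ℝ) < 3) (by omega : b < a)
    linarith

private lemma aux_abs3_inj {n : ℕ} {i j j' : Fin n} (hj : j ≠ i) (hj' : j' ≠ i)
    (h : |(3:ℝ)^(j:ℕ) - 3^(i:ℕ)| = |(3:ℝ)^(j':ℕ) - 3^(i:ℕ)|) : j = j' := by
  have hji : (j:ℕ) ≠ (i:ℕ) := fun he => hj (Fin.ext he)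
  have hji' : (j':ℕ) ≠ (i:ℕ) := fun he => hj' (Fin.ext he)
  rcases abs_eq_abs.mp h with h1 | h2
  · have : (3:ℝ)^(j:ℕ) = 3^(j':ℕ) := by linarith
    exact Fin.ext (aux_three_pow_inj this)
  · exfalso
    have hsum : (3:ℝ)^(j:ℕ) + 3^(j':ℕ) = 2 * 3^(i:ℕ) := by linarith
    have hpos : ∀ m : ℕ, (0:ℝ) < 3^m := fun m => pow_pos (by norm_num) m
    rcases Nat.lt_or_ge (i:ℕ) (j:ℕ) with hc | hc
    · have h3 : (3:ℝ)^((i:ℕ)+1) ≤ 3^(j:ℕ) := pow_le_pow_right₀ (by norm_num) hc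
      have : (3:ℝ)^((i:ℕ)+1) = 3 * 3^(i:ℕ) := by rw [pow_succ]; ring
      have := hpos (j':ℕ); have := hpos (i:ℕ)
      linarith
    · rcases Nat.lt_or_ge (i:ℕ) (j':ℕ) with hc' | hc'
      · have h3 : (3:ℝ)^((i:ℕ)+1) ≤ 3^(j':ℕ) := pow_le_pow_right₀ (by norm_num) hc'
        have : (3:ℝ)^((i:ℕ)+1) = 3 * 3^(i:ℕ) := by rw [pow_succ]; ring
        have := hpos (j:ℕ); have := hpos (i:ℕ)
        linarith
      · -- j < i and j' < i
        have ha : (j:ℕ) + 1 ≤ (i:ℕ) := by omega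
        have hb : (j':ℕ) + 1 ≤ (i:ℕ) := by omega
        have h3 : (3:ℝ)^((j:ℕ)+1) ≤ 3^(i:ℕ) := pow_le_pow_right₀ (by norm_num) ha
        have h4 : (3:ℝ)^((j':ℕ)+1) ≤ 3^(i:ℕ) := pow_le_pow_right₀ (by norm_num) hb
        have e3 : (3:ℝ)^((j:ℕ)+1) = 3 * 3^(j:ℕ) := by rw [pow_succ]; ring
        have e4 : (3:ℝ)^((j':ℕ)+1) = 3 * 3^(j':ℕ) := by rw [pow_succ]; ring
        have := hpos (j:ℕ); have := hpos (j':ℕ)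
        linarith

private lemma aux_two_le_abs3 {a b : ℕ} (h : a ≠ b) : 2 ≤ |(3:ℝ)^a - 3^b| := by
  have hpos : ∀ m : ℕ, (1:ℝ) ≤ 3^m := fun m => one_le_pow₀ (by norm_num)
  rcases Nat.lt_or_ge a b with hlt | hge
  · have h3 : (3:ℝ)^(a+1) ≤ 3^b := pow_le_pow_right₀ (by norm_num) hlt
    have e : (3:ℝ)^(a+1) = 3 * 3^a := by rw [pow_succ]; ring
    have := hpos a
    have : (2:ℝ) ≤ 3^b - 3^a := by linarith
    calc (2:ℝ) ≤ 3^b - 3^a := this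
      _ ≤ |(3:ℝ)^b - 3^a| := le_abs_self _
      _ = |(3:ℝ)^a - 3^b| := abs_sub_comm _ _
  · have hlt : b < a := by omega
    have h3 : (3:ℝ)^(b+1) ≤ 3^a := pow_le_pow_right₀ (by norm_num) hlt
    have e : (3:ℝ)^(b+1) = 3 * 3^b := by rw [pow_succ]; ring
    have := hpos b
    have h2 : (2:ℝ) ≤ 3^a - 3^b := by linarith
    exact h2.trans (le_abs_self _)

private lemma aux_rpow_inj {a b r : ℝ} (ha : 0 ≤ a) (hb : 0 ≤ b) (hr : 0 < r)
    (h : a ^ r = b ^ r) : a = b := by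
  rcases lt_trichotomy a b with hlt | he | hgt
  · exact absurd h (ne_of_lt (Real.rpow_lt_rpow ha hlt hr))
  · exact he
  · exact absurd h.symm (ne_of_lt (Real.rpow_lt_rpow hb hgt hr))

private lemma aux_ncard_le_one {α : Type*} {s : Set α} (h : s.Subsingleton) : s.ncard ≤ 1 := by
  rcases s.eq_empty_or_nonempty with rfl | ⟨x, hx⟩
  · simp
  · have : s = {x} := Set.eq_singleton_iff_unique_mem.mpr ⟨hx, fun y hy => h hy hx⟩
    simp [this]

/-- If every nearest-neighbor set of `X'` is a subsingleton, the robustness is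
at most `n / NEAR(p,X)`. -/
private lemma aux_main_red {n k : ℕ} (hn : 2 ≤ n) (p : ℝ≥0∞) (X : Fin n → Fin k → ℝ)
    (X' : Fin n → Fin (k+1) → ℝ)
    (hsub : ∀ i, (nearSet p X' i).Subsingleton) :
    robPlus p X X' ≤ (n:ℝ) / (NEARcount p X : ℝ) := by
  have hnt : Nontrivial (Fin n) := ⟨⟨⟨0, by omega⟩, ⟨1, by omega⟩, by simp [Fin.ext_iff]⟩⟩
  have hne : ∀ i : Fin n, (nearSet p X i).Nonempty := by
    intro i
    obtain ⟨j, hj⟩ := exists_ne i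
    obtain ⟨m, hm, hmin⟩ := Finset.exists_min_image (Finset.univ.erase i) (distMat p X i)
      ⟨j, Finset.mem_erase.mpr ⟨hj, Finset.mem_univ _⟩⟩
    exact ⟨m, (Finset.mem_erase.mp hm).1,
      fun j' hj' => hmin j' (Finset.mem_erase.mpr ⟨hj', Finset.mem_univ _⟩)⟩
  have hpos : 0 < NEARcount p X := by
    unfold NEARcount
    have i0 : Fin n := ⟨0, by omega⟩
    refine Finset.sum_pos' (fun i _ => Nat.zero_le _) ⟨i0, Finset.mem_univ _, ?_⟩
    exact (Set.ncard_pos (Set.toFinite _)).mpr (hne i0)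
  have hc : (0:ℝ) < (NEARcount p X : ℝ) := by exact_mod_cast hpos
  unfold robPlus
  have hnum : (∑ i, ((nearSet p X i ∩ nearSet p X' i).ncard : ℝ)) ≤ n := by
    calc (∑ i, ((nearSet p X i ∩ nearSet p X' i).ncard : ℝ))
        ≤ ∑ _i : Fin n, (1:ℝ) := by
          refine Finset.sum_le_sum (fun i _ => ?_)
          exact_mod_cast aux_ncard_le_one ((hsub i).anti Set.inter_subset_right)
      _ = n := by simp
  gcongr

/-- Given `p` and `X` there is a one-column extension `X'` of `X` with
`ROB⁺(p,X,X') ≤ n / NEAR(p,X)`. -/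
theorem stmt_3 (n k : ℕ) (hn : 2 ≤ n) (hk : 1 ≤ k)
    (p : ℝ≥0∞) (hp : 1 ≤ p) (X : Fin n → Fin k → ℝ) :
    ∃ y : Fin n → ℝ,
      robPlus p X (fun i => Fin.snoc (X i) (y i)) ≤ (n : ℝ) / (NEARcount p X : ℝ) := by
  by_cases hptop : p = ⊤
  · subst hptop
    set A : ℝ≥0 := Finset.univ.sup
      (fun q : Fin n × Fin n × Fin k => Real.nnabs (X q.2.1 q.2.2 - X q.1 q.2.2)) with hA
    set t : ℝ := (A:ℝ) + 1 with ht
    have ht0 : 0 < t := by positivity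
    refine ⟨fun i => t * 3^(i:ℕ), aux_main_red hn ⊤ X _ ?_⟩
    intro i j hj j' hj'
    have key : ∀ m : Fin n, m ≠ i →
        distMat ⊤ (fun i => Fin.snoc (X i) (t * 3^(i:ℕ))) i m
          = t * |(3:ℝ)^(m:ℕ) - 3^(i:ℕ)| := by
      intro m hm
      have hdom : ∀ s : Fin (k+1),
          Real.nnabs ((Fin.snoc (X m) (t * 3^(m:ℕ)) : Fin (k+1) → ℝ) s
            - (Fin.snoc (X i) (t * 3^(i:ℕ)) : Fin (k+1) → ℝ) s)
            ≤ Real.nnabs (t * 3^(m:ℕ) - t * 3^(i:ℕ)) := by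
        intro s
        induction s using Fin.lastCases with
        | last => simp [Fin.snoc_last]
        | cast u =>
          rw [Fin.snoc_castSucc, Fin.snoc_castSucc]
          have h1 : Real.nnabs (X m u - X i u) ≤ A :=
            Finset.le_sup (f := fun q : Fin n × Fin n × Fin k =>
              Real.nnabs (X q.2.1 q.2.2 - X q.1 q.2.2)) (Finset.mem_univ (i, m, u))
          refine h1.trans ?_
          rw [← NNReal.coe_le_coe, Real.coe_nnabs]
          have e : t * 3^(m:ℕ) - t * 3^(i:ℕ) = t * ((3:ℝ)^(m:ℕ) - 3^(i:ℕ)) := by ring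
          rw [e, abs_mul, abs_of_pos ht0]
          have h2 : (2:ℝ) ≤ |(3:ℝ)^(m:ℕ) - 3^(i:ℕ)| :=
            aux_two_le_abs3 (fun he => hm (Fin.ext he))
          nlinarith [A.coe_nonneg]
      have hsup : (Finset.univ.sup fun s =>
          Real.nnabs ((Fin.snoc (X m) (t * 3^(m:ℕ)) : Fin (k+1) → ℝ) s
            - (Fin.snoc (X i) (t * 3^(i:ℕ)) : Fin (k+1) → ℝ) s))
          = Real.nnabs (t * 3^(m:ℕ) - t * 3^(i:ℕ)) := by
        refine le_antisymm (Finset.sup_le fun s _ => hdom s) ?_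
        have := Finset.le_sup (f := fun s =>
          Real.nnabs ((Fin.snoc (X m) (t * 3^(m:ℕ)) : Fin (k+1) → ℝ) s
            - (Fin.snoc (X i) (t * 3^(i:ℕ)) : Fin (k+1) → ℝ) s))
          (Finset.mem_univ (Fin.last k))
        simpa [Fin.snoc_last] using this
      simp only [distMat, if_pos rfl]
      rw [hsup, Real.coe_nnabs]
      rw [show t * 3^(m:ℕ) - t * 3^(i:ℕ) = t * ((3:ℝ)^(m:ℕ) - 3^(i:ℕ)) by ring,
        abs_mul, abs_of_pos ht0]
      simp
    have h1 := hj.2 j' hj'.1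
    have h2 := hj'.2 j hj.1
    have heq := le_antisymm h1 h2
    rw [key j hj.1, key j' hj'.1] at heq
    exact aux_abs3_inj hj.1 hj'.1 (mul_left_cancel₀ ht0.ne' heq)
  · -- finite p
    have hr1 : (1:ℝ) ≤ p.toReal := by
      have := ENNReal.toReal_mono hptop hp
      simpa using this
    set r := p.toReal with hrdef
    have hr0 : (0:ℝ) < r := lt_of_lt_of_le one_pos hr1
    set g : Fin n → Fin n → ℝ := fun i j => |(3:ℝ)^(j:ℕ) - 3^(i:ℕ)| with hgdef
    set S : Fin n → Fin n → ℝ := fun i j => ∑ s, |X j s - X i s| ^ r with hSdef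
    have hSnn : ∀ i j, 0 ≤ S i j :=
      fun i j => Finset.sum_nonneg (fun s _ => Real.rpow_nonneg (abs_nonneg _) r)
    set M : ℝ := ∑ i, ∑ j, S i j with hMdef
    have hSle : ∀ i j, S i j ≤ M := by
      intro i j
      calc S i j ≤ ∑ j', S i j' :=
            Finset.single_le_sum (fun j' _ => hSnn i j') (Finset.mem_univ j)
        _ ≤ M := Finset.single_le_sum
            (fun i' _ => Finset.sum_nonneg fun j' _ => hSnn i' j') (Finset.mem_univ i)
    have hM0 : 0 ≤ M := le_trans (hSnn ⟨0, by omega⟩ ⟨0, by omega⟩) (hSle _ _)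
    haveI : Nonempty (Fin n) := ⟨⟨0, by omega⟩⟩
    have hne3 : (Finset.univ : Finset (Fin n × Fin n × Fin n)).Nonempty := Finset.univ_nonempty
    set F : Fin n × Fin n × Fin n → ℝ := fun q =>
      if q.2.1 ≠ q.1 ∧ q.2.2 ≠ q.1 ∧ q.2.1 ≠ q.2.2
      then |g q.1 q.2.1 ^ r - g q.1 q.2.2 ^ r| else 1 with hFdef
    set c : ℝ := Finset.inf' Finset.univ hne3 F with hcdef
    have hc0 : (0:ℝ) < c := by
      rw [hcdef, Finset.lt_inf'_iff]
      intro q _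
      simp only [hFdef]
      split_ifs with hq
      · obtain ⟨hq1, hq2, hq3⟩ := hq
        have hgne : g q.1 q.2.1 ≠ g q.1 q.2.2 := fun he => hq3 (aux_abs3_inj hq1 hq2 he)
        have hrne : g q.1 q.2.1 ^ r ≠ g q.1 q.2.2 ^ r :=
          fun he => hgne (aux_rpow_inj (abs_nonneg _) (abs_nonneg _) hr0 he)
        exact abs_pos.mpr (sub_ne_zero.mpr hrne)
      · norm_num
    have hcle : ∀ i j j' : Fin n, j ≠ i → j' ≠ i → j ≠ j' →
        c ≤ |g i j ^ r - g i j' ^ r| := by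
      intro i j j' h1 h2 h3
      have h : c ≤ F (i, j, j') := Finset.inf'_le F (Finset.mem_univ (i, j, j'))
      simpa [hFdef, h1, h2, h3] using h
    set t : ℝ := ((M + 1) / c) ^ r⁻¹ with htdef
    have hbase : (0:ℝ) ≤ (M + 1) / c := by positivity
    have htnn : 0 ≤ t := Real.rpow_nonneg hbase _
    have htr : t ^ r = (M + 1) / c := Real.rpow_inv_rpow hbase hr0.ne'
    have htrnn : 0 ≤ t ^ r := Real.rpow_nonneg htnn _
    refine ⟨fun i => t * 3^(i:ℕ), aux_main_red hn p X _ ?_⟩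
    intro i j hj j' hj'
    by_contra hjj
    have key : ∀ m : Fin n,
        distMat p (fun i => Fin.snoc (X i) (t * 3^(i:ℕ))) i m
          = (S i m + t ^ r * g i m ^ r) ^ (1/r) := by
      intro m
      simp only [distMat, if_neg hptop]
      rw [Fin.sum_univ_castSucc]
      congr 1
      congr 1
      · exact Finset.sum_congr rfl (fun s _ => by rw [Fin.snoc_castSucc, Fin.snoc_castSucc])
      · rw [Fin.snoc_last, Fin.snoc_last,
          show t * 3^(m:ℕ) - t * 3^(i:ℕ) = t * ((3:ℝ)^(m:ℕ) - 3^(i:ℕ)) by ring,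
          abs_mul, abs_of_nonneg htnn, Real.mul_rpow htnn (abs_nonneg _)]
    have h1 := hj.2 j' hj'.1
    have h2 := hj'.2 j hj.1
    have heq := le_antisymm h1 h2
    rw [key j, key j'] at heq
    have hE : 0 ≤ S i j + t ^ r * g i j ^ r := by
      have := Real.rpow_nonneg (abs_nonneg ((3:ℝ)^(j:ℕ) - 3^(i:ℕ))) r
      nlinarith [hSnn i j]
    have hE' : 0 ≤ S i j' + t ^ r * g i j' ^ r := by
      have := Real.rpow_nonneg (abs_nonneg ((3:ℝ)^((j':Fin n):ℕ) - 3^(i:ℕ))) r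
      nlinarith [hSnn i j']
    have hEeq : S i j + t ^ r * g i j ^ r = S i j' + t ^ r * g i j' ^ r :=
      aux_rpow_inj hE hE' (by positivity) heq
    have hlhs : t ^ r * (g i j ^ r - g i j' ^ r) = S i j' - S i j := by linarith
    have habs : t ^ r * |g i j ^ r - g i j' ^ r| = |S i j' - S i j| := by
      rw [← abs_of_nonneg htrnn, ← abs_mul, hlhs]
    have hub : |S i j' - S i j| ≤ M := by
      rw [abs_le]
      constructor
      · have := hSnn i j'; have := hSle i j; linarith
      · have := hSnn i j; have := hSle i j'; linarith
    have hlb : t ^ r * c ≤ t ^ r * |g i j ^ r - g i j' ^ r| :=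
      mul_le_mul_of_nonneg_left (hcle i j j' hj.1 hj'.1 hjj) htrnn
    have htc : t ^ r * c = M + 1 := by
      rw [htr, div_mul_cancel₀ _ hc0.ne']
    rw [habs] at hlb
    linarith [hlb, hub, htc]
end

section
/- Let n ≥ 2, k ≥ 1, p ∈ [1,∞], and let X : Fin n → Fin k → ℝ. Then there exists a column y : Fin n → ℝ such that, letting X' : Fin n → Fin (k+1) → ℝ agree with X on the first k columns and have last column y, every row of X' has exactly one p-nearest neighbor: #NEAR(p,X',i) = 1 for every i, and hence NEAR(p,X') = n. -/
open scoped ENNReal NNReal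

private lemma my_rpow_add_rpow_le_add {x y q : ℝ} (hx : 0 ≤ x) (hy : 0 ≤ y) (hq : 1 ≤ q) :
    (x ^ q + y ^ q) ^ (1 / q) ≤ x + y := by
  have h := NNReal.rpow_add_rpow_le_add x.toNNReal y.toNNReal hq
  have h2 := NNReal.coe_le_coe.2 h
  rwa [NNReal.coe_rpow, NNReal.coe_add, NNReal.coe_rpow, NNReal.coe_rpow,
    NNReal.coe_add, Real.coe_toNNReal x hx, Real.coe_toNNReal y hy] at h2

private lemma distMat_nonneg {n k : ℕ} (p : ℝ≥0∞) (X : Fin n → Fin k → ℝ) (i j : Fin n) :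
    0 ≤ distMat p X i j := by
  unfold distMat
  split
  · exact NNReal.coe_nonneg _
  · positivity

private lemma distMat_bounds {n k : ℕ} (p : ℝ≥0∞) (hp : 1 ≤ p)
    (X : Fin n → Fin k → ℝ) (y : Fin n → ℝ) (i j : Fin n) :
    |y j - y i| ≤ distMat p (fun i' => Fin.snoc (X i') (y i')) i j ∧
    distMat p (fun i' => Fin.snoc (X i') (y i')) i j ≤ distMat p X i j + |y j - y i| := by
  by_cases htop : p = ⊤
  · subst htop
    have hsup : (Finset.univ.sup fun t : Fin (k+1) =>
        Real.nnabs ((Fin.snoc (X j) (y j) : Fin (k+1) → ℝ) t -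
          (Fin.snoc (X i) (y i) : Fin (k+1) → ℝ) t)) =
        Real.nnabs (y j - y i) ⊔ Finset.univ.sup (fun t : Fin k => Real.nnabs (X j t - X i t)) := by
      rw [Fin.univ_castSuccEmb, Finset.sup_cons, Finset.sup_map]
      simp only [Function.comp_def, Fin.coe_castSuccEmb, Fin.snoc_last, Fin.snoc_castSucc]
    simp only [distMat, if_pos rfl]
    rw [hsup]
    constructor
    · rw [← Real.coe_nnabs]
      exact_mod_cast le_sup_left
    · push_cast
      rw [← Real.coe_nnabs]
      refine max_le ?_ ?_
      · exact le_add_of_nonneg_left (NNReal.coe_nonneg _)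
      · exact le_add_of_nonneg_right (abs_nonneg _)
  · have hq1 : 1 ≤ p.toReal := by
      simpa using ENNReal.toReal_mono htop hp
    have hq0 : (0:ℝ) < p.toReal := lt_of_lt_of_le one_pos hq1
    set q := p.toReal with hqdef
    have hsum : (∑ t : Fin (k+1), |(Fin.snoc (X j) (y j) : Fin (k+1) → ℝ) t -
        (Fin.snoc (X i) (y i) : Fin (k+1) → ℝ) t| ^ q) =
        (∑ t : Fin k, |X j t - X i t| ^ q) + |y j - y i| ^ q := by
      rw [Fin.sum_univ_castSucc]
      simp
    have hA : (0:ℝ) ≤ ∑ t : Fin k, |X j t - X i t| ^ q := by positivity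
    simp only [distMat, if_neg htop, ← hqdef]
    rw [hsum]
    set A := ∑ t : Fin k, |X j t - X i t| ^ q with hAdef
    constructor
    · have heq : (|y j - y i| ^ q) ^ (1/q) = |y j - y i| := by
        rw [← Real.rpow_mul (abs_nonneg _), mul_one_div, div_self hq0.ne', Real.rpow_one]
      calc |y j - y i| = (|y j - y i| ^ q) ^ (1/q) := heq.symm
        _ ≤ (A + |y j - y i| ^ q) ^ (1/q) := by
            apply Real.rpow_le_rpow (by positivity) (le_add_of_nonneg_left hA) (by positivity)
    · have hx : (0:ℝ) ≤ A ^ (1/q) := by positivity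
      have hxq : (A ^ (1/q)) ^ q = A := by
        rw [← Real.rpow_mul hA, one_div, inv_mul_cancel₀ hq0.ne', Real.rpow_one]
      calc (A + |y j - y i| ^ q) ^ (1/q)
          = ((A ^ (1/q)) ^ q + |y j - y i| ^ q) ^ (1/q) := by rw [hxq]
        _ ≤ A ^ (1/q) + |y j - y i| := my_rpow_add_rpow_le_add hx (abs_nonneg _) hq1

private lemma pow4_mono {a b : ℕ} (h : a ≤ b) : (4:ℝ)^a ≤ 4^b :=
  pow_le_pow_right₀ (by norm_num) h

private lemma gap_lemma (i j j0 : ℕ) (hj : j ≠ i) (hjj0 : j ≠ j0)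
    (hj0 : j0 = if i = 0 then 1 else i - 1) :
    |(4:ℝ)^j0 - 4^i| + 3 ≤ |(4:ℝ)^j - 4^i| := by
  have habs : ∀ a b : ℕ, a ≤ b → |(4:ℝ)^a - 4^b| = 4^b - 4^a := fun a b h => by
    rw [abs_sub_comm, abs_of_nonneg (sub_nonneg.2 (pow4_mono h))]
  rcases Nat.eq_zero_or_pos i with hi | hi
  · subst hi
    have hj01 : j0 = 1 := by rw [hj0]; simp
    subst hj01
    have h2j : 2 ≤ j := by omega
    rw [abs_sub_comm, habs 0 1 (by omega), abs_sub_comm, habs 0 j (by omega)]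
    have := pow4_mono h2j
    norm_num at this ⊢
    linarith
  · obtain ⟨m, rfl⟩ : ∃ m, i = m + 1 := ⟨i - 1, by omega⟩
    have hj0m : j0 = m := by rw [hj0]; simp
    subst hj0m
    rw [habs j0 (j0+1) (by omega)]
    rcases lt_or_gt_of_ne hj with hlt | hgt
    · have hjm : j + 1  + 0 ≤ j0 := by omega
      rw [habs j (j0+1) (by omega)]
      have h1 : (4:ℝ)^(j+1) ≤ 4^j0 := pow4_mono hjm
      have h2 : (1:ℝ) ≤ 4^j := one_le_pow₀ (by norm_num)
      rw [pow_succ] at h1 ⊢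
      linarith
    · have hjm : j0 + 2 ≤ j := by omega
      rw [abs_sub_comm, habs (j0+1) j (by omega)]
      have h1 : (4:ℝ)^(j0+2) ≤ 4^j := pow4_mono hjm
      have h2 : (1:ℝ) ≤ 4^j0 := one_le_pow₀ (by norm_num)
      rw [pow_succ] at h1 ⊢
      rw [pow_succ] at h1
      linarith

/-- Given `p` and `X` there is a one-column extension `X'` of `X` such that every
row of `X'` has exactly one `p`-nearest neighbor, hence `NEAR(p,X') = n`. -/
theorem stmt_4 (n k : ℕ) (hn : 2 ≤ n) (hk : 1 ≤ k)
    (p : ℝ≥0∞) (hp : 1 ≤ p) (X : Fin n → Fin k → ℝ) :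
    ∃ y : Fin n → ℝ,
      (∀ i : Fin n, (nearSet p (fun i' => Fin.snoc (X i') (y i')) i).ncard = 1) ∧
      NEARcount p (fun i' => Fin.snoc (X i') (y i')) = n := by
  classical
  set B : ℝ := ∑ i : Fin n, ∑ j : Fin n, distMat p X i j with hBdef
  have hB0 : 0 ≤ B := Finset.sum_nonneg fun i _ =>
    Finset.sum_nonneg fun j _ => distMat_nonneg p X i j
  have hB : ∀ i j : Fin n, distMat p X i j ≤ B := by
    intro i j
    calc distMat p X i j ≤ ∑ j' : Fin n, distMat p X i j' :=
          Finset.single_le_sum (fun j' _ => distMat_nonneg p X i j') (Finset.mem_univ j)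
      _ ≤ B := Finset.single_le_sum
          (fun i' _ => Finset.sum_nonneg fun j' _ => distMat_nonneg p X i' j')
          (Finset.mem_univ i)
  set c : ℝ := B + 1 with hcdef
  have hc : 0 < c := by linarith
  set y : Fin n → ℝ := fun i => c * 4 ^ (i : ℕ) with hydef
  set P : Fin n → Fin (k + 1) → ℝ := fun i' => Fin.snoc (X i') (y i') with hPdef
  have habsy : ∀ i j : Fin n, |y j - y i| = c * |(4:ℝ) ^ (j:ℕ) - 4 ^ (i:ℕ)| := by
    intro i j
    rw [hydef]
    rw [← mul_sub, abs_mul, abs_of_pos hc]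
  have hnear : ∀ i : Fin n, ∃ j0 : Fin n, nearSet p P i = {j0} := by
    intro i
    refine ⟨⟨if (i : ℕ) = 0 then 1 else (i : ℕ) - 1, by have := i.isLt; split <;> omega⟩, ?_⟩
    set j0 : Fin n := ⟨if (i : ℕ) = 0 then 1 else (i : ℕ) - 1, by have := i.isLt; split <;> omega⟩ with hj0def
    have hj0i : j0 ≠ i := by
      rw [Fin.ne_iff_vne, hj0def]
      simp only []
      split <;> omega
    have key : ∀ j : Fin n, j ≠ i → j ≠ j0 → distMat p P i j0 < distMat p P i j := by
      intro j hji hjj0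
      have hgap := gap_lemma (i : ℕ) (j : ℕ) (j0 : ℕ)
        (fun h => hji (Fin.val_injective h)) (fun h => hjj0 (Fin.val_injective h))
        (by rw [hj0def])
      have hub := (distMat_bounds p hp X y i j0).2
      have hlb := (distMat_bounds p hp X y i j).1
      rw [habsy] at hub hlb
      have h3c : B < 3 * c := by rw [hcdef]; linarith
      have hmul : c * (|(4:ℝ) ^ (j0:ℕ) - 4 ^ (i:ℕ)| + 3) ≤ c * |(4:ℝ) ^ (j:ℕ) - 4 ^ (i:ℕ)| :=
        mul_le_mul_of_nonneg_left hgap hc.le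
      have := hB i j0
      rw [← hPdef] at hub hlb
      nlinarith [hub, hlb, hmul]
    have hmem : j0 ∈ nearSet p P i := by
      refine ⟨hj0i, fun j' hj' => ?_⟩
      by_cases h : j' = j0
      · exact h ▸ le_refl _
      · exact (key j' hj' h).le
    ext j
    simp only [Set.mem_singleton_iff]
    constructor
    · rintro ⟨hji, hmin⟩
      by_contra hne
      exact absurd (hmin j0 hj0i) (not_le.2 (key j hji hne))
    · rintro rfl; exact hmem
  refine ⟨y, fun i => ?_, ?_⟩
  · obtain ⟨j0, hj0⟩ := hnear i
    rw [← hPdef, hj0, Set.ncard_singleton]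
  · unfold NEARcount
    rw [← hPdef]
    have : ∀ i : Fin n, (nearSet p P i).ncard = 1 := fun i => by
      obtain ⟨j0, hj0⟩ := hnear i; rw [hj0, Set.ncard_singleton]
    simp [this]
end

section
/- Let n ≥ 2, k ≥ 1, p ∈ [1,∞], and let X : Fin n → Fin k → ℝ. Then NEAR(p,X) ≠ n(n−1) − 1. -/
open scoped ENNReal NNReal

lemma distMat_symm {n k : ℕ} (p : ℝ≥0∞) (X : Fin n → Fin k → ℝ) (i j : Fin n) :
    distMat p X i j = distMat p X j i := by
  have key : ∀ a b : ℝ, Real.nnabs (a - b) = Real.nnabs (b - a) := fun a b =>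
    NNReal.coe_injective (by simp [abs_sub_comm])
  unfold distMat
  split_ifs with h
  · norm_num
    congr 1
    funext t
    exact key _ _
  · congr 1
    exact Finset.sum_congr rfl fun t _ => by rw [abs_sub_comm]

lemma near_subset {n k : ℕ} (p : ℝ≥0∞) (X : Fin n → Fin k → ℝ) (i : Fin n) :
    nearSet p X i ⊆ {i}ᶜ := fun j hj => hj.1

lemma compl_ncard {n : ℕ} (i : Fin n) : ({i}ᶜ : Set (Fin n)).ncard = n - 1 := by
  have : ({i}ᶜ : Set (Fin n)).toFinset = Finset.univ.erase i := by
    ext j; simp [Finset.mem_erase]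
  rw [Set.ncard_eq_toFinset_card', this, Finset.card_erase_of_mem (Finset.mem_univ i)]
  simp

lemma near_nonempty {n k : ℕ} (hn : 2 ≤ n) (p : ℝ≥0∞) (X : Fin n → Fin k → ℝ) (i : Fin n) :
    (nearSet p X i).Nonempty := by
  have : Nontrivial (Fin n) := Fin.nontrivial_iff_two_le.mpr hn
  obtain ⟨j0, hj0⟩ := exists_ne i
  obtain ⟨j, hj, hmin⟩ := Finset.exists_min_image (Finset.univ.erase i)
    (distMat p X i) ⟨j0, Finset.mem_erase.mpr ⟨hj0, Finset.mem_univ _⟩⟩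
  exact ⟨j, Finset.ne_of_mem_erase hj,
    fun j' hj' => hmin j' (Finset.mem_erase.mpr ⟨hj', Finset.mem_univ _⟩)⟩

lemma near_card_le {n k : ℕ} (p : ℝ≥0∞) (X : Fin n → Fin k → ℝ) (i : Fin n) :
    (nearSet p X i).ncard ≤ n - 1 := by
  rw [← compl_ncard i]
  exact Set.ncard_le_ncard (near_subset p X i) (Set.toFinite _)

lemma near_eq_of_card {n k : ℕ} (p : ℝ≥0∞) (X : Fin n → Fin k → ℝ) (i : Fin n)
    (h : (nearSet p X i).ncard = n - 1) : nearSet p X i = {i}ᶜ :=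
  Set.eq_of_subset_of_ncard_le (near_subset p X i)
    (by rw [h, compl_ncard]) (Set.toFinite _)


/-- The symmetry of `D(p,X)` implies `NEAR(p,X) ≠ n(n-1) - 1`. -/
theorem stmt_7 (n k : ℕ) (hn : 2 ≤ n) (hk : 1 ≤ k)
    (p : ℝ≥0∞) (hp : 1 ≤ p) (X : Fin n → Fin k → ℝ) :
    NEARcount p X ≠ n * (n - 1) - 1 := by
  intro hsum
  unfold NEARcount at hsum
  set s : Fin n → ℕ := fun i => (nearSet p X i).ncard with hs
  -- there is a non-full index
  have hle : ∀ i, s i ≤ n - 1 := fun i => near_card_le p X i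
  have hpos : ∀ i, 1 ≤ s i := fun i =>
    (Set.ncard_pos (Set.toFinite _)).mpr (near_nonempty hn p X i)
  have hex : ∃ i₀, s i₀ < n - 1 := by
    by_contra h
    push_neg at h
    have hall : ∀ i ∈ Finset.univ, s i = n - 1 := fun i _ => le_antisymm (hle i) (h i)
    rw [Finset.sum_congr rfl hall, Finset.sum_const, Finset.card_univ, Fintype.card_fin,
      smul_eq_mul] at hsum
    have : 2 ≤ n * (n - 1) := by
      calc 2 = 2 * 1 := rfl
      _ ≤ n * (n - 1) := Nat.mul_le_mul hn (by omega)
    omega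
  obtain ⟨i₀, hi₀⟩ := hex
  -- every other index is full
  have hfull : ∀ i, i ≠ i₀ → s i = n - 1 := by
    intro i₁ hne
    by_contra h1
    have h1 : s i₁ < n - 1 := lt_of_le_of_ne (hle i₁) h1
    -- sum bound contradiction
    have e1 : ∑ i, s i = s i₀ + (s i₁ + ∑ i ∈ (Finset.univ.erase i₀).erase i₁, s i) := by
      rw [Finset.add_sum_erase _ s (Finset.mem_erase.mpr ⟨hne, Finset.mem_univ _⟩),
        Finset.add_sum_erase _ s (Finset.mem_univ i₀)]
    have hcard : ((Finset.univ.erase i₀).erase i₁).card = n - 2 := by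
      rw [Finset.card_erase_of_mem (Finset.mem_erase.mpr ⟨hne, Finset.mem_univ _⟩),
        Finset.card_erase_of_mem (Finset.mem_univ i₀), Finset.card_univ, Fintype.card_fin]
      omega
    have e2 : ∑ i ∈ (Finset.univ.erase i₀).erase i₁, s i ≤ (n - 2) * (n - 1) := by
      calc ∑ i ∈ (Finset.univ.erase i₀).erase i₁, s i
          ≤ ∑ _i ∈ (Finset.univ.erase i₀).erase i₁, (n - 1) :=
            Finset.sum_le_sum fun i _ => hle i
        _ = (n - 2) * (n - 1) := by rw [Finset.sum_const, hcard, smul_eq_mul]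
    -- n ≥ 3 since 1 ≤ s i₁ < n - 1
    have hn3 : 3 ≤ n := by have := hpos i₁; omega
    obtain ⟨a, rfl⟩ : ∃ a, n = a + 3 := ⟨n - 3, by omega⟩
    have hm1 : a + 3 - 1 = a + 2 := by omega
    have hm2 : a + 3 - 2 = a + 1 := by omega
    rw [hm1] at hsum
    rw [hm1, hm2] at e2
    have hsi0 : s i₀ ≤ a + 1 := by omega
    have hsi1 : s i₁ ≤ a + 1 := by omega
    have hb : ∑ i, s i ≤ (a + 1) + ((a + 1) + (a + 1) * (a + 2)) := by
      rw [e1]; exact Nat.add_le_add hsi0 (Nat.add_le_add hsi1 e2)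
    rw [hsum] at hb
    have hx : (a + 3) * (a + 2) = ((a + 1) + ((a + 1) + (a + 1) * (a + 2))) + 2 := by ring
    omega
  -- distances from full indices are constant
  have hd : ∀ i j j' : Fin n, i ≠ i₀ → j ≠ i → j' ≠ i →
      distMat p X i j = distMat p X i j' := by
    intro i j j' hi hj hj'
    have hfulli := near_eq_of_card p X i (hfull i hi)
    have h1 : j ∈ nearSet p X i := by rw [hfulli]; exact hj
    have h2 : j' ∈ nearSet p X i := by rw [hfulli]; exact hj'
    exact le_antisymm (h1.2 j' hj') (h2.2 j hj)
  -- distances from i₀ are constant too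
  have hconst : ∀ j j' : Fin n, j ≠ i₀ → j' ≠ i₀ →
      distMat p X i₀ j = distMat p X i₀ j' := by
    intro j j' hj hj'
    rcases eq_or_ne j j' with rfl | hne
    · rfl
    calc distMat p X i₀ j = distMat p X j i₀ := distMat_symm p X i₀ j
      _ = distMat p X j j' := hd j i₀ j' hj (Ne.symm hj) (Ne.symm hne)
      _ = distMat p X j' j := distMat_symm p X j j'
      _ = distMat p X j' i₀ := hd j' j i₀ hj' hne (Ne.symm hj')
      _ = distMat p X i₀ j' := (distMat_symm p X i₀ j').symm
  have : nearSet p X i₀ = {i₀}ᶜ := by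
    apply Set.Subset.antisymm (near_subset p X i₀)
    intro j hj
    exact ⟨hj, fun j' hj' => le_of_eq (hconst j j' hj hj')⟩
  have : s i₀ = n - 1 := by show (nearSet p X i₀).ncard = n - 1; rw [this, compl_ncard]
  omega
end

section
/- Let n = 3, let X : Fin 3 → Fin 1 → ℝ be the column matrix with rows (2), (5), (1), and let X' : Fin 3 → Fin 2 → ℝ be the matrix with rows (2,50), (5,20), (1,10). Then for every finite real p ∈ [1,∞), the nearest-neighbor sets of X and X' are disjoint in every row: NEAR(p,X,i) ∩ NEAR(p,X',i) = ∅ for each i : Fin 3, and consequently ROB⁺(p,X,X') = 0. -/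
open scoped ENNReal NNReal

/-! For finite `p ≥ 1` the `ℓ^p` distance between two rows lies between the largest and the sum
of their coordinatewise differences, and these crude bounds already decide every nearest
neighbour: in `X` they are `0 ↦ 2`, `1 ↦ 0`, `2 ↦ 0`, whereas the large second column of `X'`
makes them `0 ↦ 1`, `1 ↦ 2`, `2 ↦ 1`. -/

theorem PiLp.dist_le_sum_dist {ι : Type*} [Fintype ι] {p : ℝ≥0∞} [Fact (1 ≤ p)]
    {β : ι → Type*} [∀ i, SeminormedAddCommGroup (β i)] (x y : PiLp p β) :
    dist x y ≤ ∑ i, dist (x i) (y i) := by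
  classical
  have hsum : x - y = ∑ i, PiLp.single p i ((x - y) i) := by
    ext j
    simp
  calc dist x y = ‖∑ i, PiLp.single p i ((x - y) i)‖ := by rw [dist_eq_norm, ← hsum]
    _ ≤ ∑ i, ‖PiLp.single p i ((x - y) i)‖ := norm_sum_le _ _
    _ = ∑ i, dist (x i) (y i) := by simp [PiLp.norm_single, dist_eq_norm]

theorem distMat_eq_dist {n k : ℕ} {p : ℝ≥0∞} (hp : p ≠ 0) (hptop : p ≠ ⊤)
    (X : Fin n → Fin k → ℝ) (i j : Fin n) :
    distMat p X i j = dist (WithLp.toLp p (X j)) (WithLp.toLp p (X i)) := by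
  rw [distMat, if_neg hptop, PiLp.dist_eq_sum (ENNReal.toReal_pos hp hptop)]
  simp [Real.dist_eq]

theorem distMat_lt_distMat_of_sum_lt {n k : ℕ} {p : ℝ≥0∞} (hp : 1 ≤ p) (hptop : p ≠ ⊤)
    {X : Fin n → Fin k → ℝ} {i j j' : Fin n} (t : Fin k)
    (h : ∑ s, |X j s - X i s| < |X j' t - X i t|) :
    distMat p X i j < distMat p X i j' := by
  have : Fact (1 ≤ p) := ⟨hp⟩
  have hp0 : p ≠ 0 := (zero_lt_one.trans_le hp).ne'
  rw [distMat_eq_dist hp0 hptop, distMat_eq_dist hp0 hptop]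
  calc dist (WithLp.toLp p (X j)) (WithLp.toLp p (X i)) ≤ ∑ s, |X j s - X i s| :=
        PiLp.dist_le_sum_dist _ _
    _ < |X j' t - X i t| := h
    _ ≤ dist (WithLp.toLp p (X j')) (WithLp.toLp p (X i)) :=
        PiLp.dist_apply_le (WithLp.toLp p (X j')) (WithLp.toLp p (X i)) t

theorem nearSet_subset_singleton_of_lt {k : ℕ} {p : ℝ≥0∞} {X : Fin 3 → Fin k → ℝ}
    {i j j' : Fin 3} (hj : j ≠ i) (hj' : j' ≠ i) (hjj' : j ≠ j')
    (h : distMat p X i j < distMat p X i j') : nearSet p X i ⊆ {j} := by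
  rintro m ⟨hm, hnear⟩
  rw [Set.mem_singleton_iff]
  by_contra hmj
  have hmj' : m = j' := by omega
  subst hmj'
  exact (hnear j hj).not_gt h

theorem nearSet_inter_nearSet_eq_empty {k k' : ℕ} {p : ℝ≥0∞} {X : Fin 3 → Fin k → ℝ}
    {X' : Fin 3 → Fin k' → ℝ} {i a b : Fin 3} (ha : a ≠ i) (hb : b ≠ i) (hab : a ≠ b)
    (h : distMat p X i a < distMat p X i b) (h' : distMat p X' i b < distMat p X' i a) :
    nearSet p X i ∩ nearSet p X' i = ∅ :=
  Set.subset_eq_empty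
    (Set.inter_subset_inter (nearSet_subset_singleton_of_lt ha hb hab h)
      (nearSet_subset_singleton_of_lt hb ha hab.symm h'))
    (Set.singleton_inter_eq_empty.2 hab)

/-- Ex6: for every finite `p ∈ [1,∞)`, the nearest-neighbor sets of `X` and its
extension `X'` are disjoint in every row, so `ROB⁺(p,X,X') = 0`. -/
theorem stmt_9 (p : ℝ≥0∞) (hp : 1 ≤ p) (hptop : p ≠ ⊤) :
    (∀ i : Fin 3,
        nearSet p (![![2], ![5], ![1]] : Fin 3 → Fin 1 → ℝ) i ∩
          nearSet p (![![2, 50], ![5, 20], ![1, 10]] : Fin 3 → Fin 2 → ℝ) i = ∅) ∧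
    robPlus p (![![2], ![5], ![1]] : Fin 3 → Fin 1 → ℝ)
        (![![2, 50], ![5, 20], ![1, 10]] : Fin 3 → Fin 2 → ℝ) = 0 := by
  have near_disjoint : ∀ i : Fin 3,
      nearSet p (![![2], ![5], ![1]] : Fin 3 → Fin 1 → ℝ) i ∩
        nearSet p (![![2, 50], ![5, 20], ![1, 10]] : Fin 3 → Fin 2 → ℝ) i = ∅ := by
    intro i
    fin_cases i <;> [
      refine nearSet_inter_nearSet_eq_empty (a := 2) (b := 1) (by decide) (by decide) (by decide)
        (distMat_lt_distMat_of_sum_lt hp hptop 0 ?_) (distMat_lt_distMat_of_sum_lt hp hptop 1 ?_);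
      refine nearSet_inter_nearSet_eq_empty (a := 0) (b := 2) (by decide) (by decide) (by decide)
        (distMat_lt_distMat_of_sum_lt hp hptop 0 ?_) (distMat_lt_distMat_of_sum_lt hp hptop 1 ?_);
      refine nearSet_inter_nearSet_eq_empty (a := 0) (b := 1) (by decide) (by decide) (by decide)
        (distMat_lt_distMat_of_sum_lt hp hptop 0 ?_) (distMat_lt_distMat_of_sum_lt hp hptop 1 ?_)]
    all_goals norm_num [Fin.sum_univ_succ, Matrix.cons_val_two, Matrix.tail_cons, Matrix.head_cons]
  exact ⟨near_disjoint, by simp [robPlus, near_disjoint]⟩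
end

section
/- Let Y : Fin 3 → Fin 2 → ℝ be the matrix with rows (2, 0), (−1, √3), (−1, −√3). Then the number of indices i : Fin 3 for which NEAR(1,Y,i) = NEAR(2,Y,i) is exactly 1, so the concordance CORD(1,2,Y) = (#{i : NEAR(1,Y,i) = NEAR(2,Y,i)})/3 equals 1/3. -/
open scoped ENNReal NNReal

noncomputable def Ymat : Fin 3 → Fin 2 → ℝ := ![![2, 0], ![-1, Real.sqrt 3], ![-1, -Real.sqrt 3]]

lemma dist1 (i j : Fin 3) : distMat 1 Ymat i j = |Ymat j 0 - Ymat i 0| + |Ymat j 1 - Ymat i 1| := by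
  simp [distMat, Fin.sum_univ_two]

lemma dist2 (i j : Fin 3) :
    distMat 2 Ymat i j = Real.sqrt ((Ymat j 0 - Ymat i 0)^2 + (Ymat j 1 - Ymat i 1)^2) := by
  have h2 : ((2:ℝ≥0∞)).toReal = (2:ℝ) := by norm_num
  have habs : ∀ x : ℝ, |x| ^ (2:ℝ) = x ^ 2 := by
    intro x
    rw [show (2:ℝ) = ((2:ℕ):ℝ) by norm_num, Real.rpow_natCast, sq_abs]
  simp [distMat, Fin.sum_univ_two, h2, habs, Real.sqrt_eq_rpow]

lemma s3 : Real.sqrt 3 ^ 2 = 3 := Real.sq_sqrt (by norm_num)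
lemma s3nn : (0:ℝ) ≤ Real.sqrt 3 := Real.sqrt_nonneg 3

-- entry simp set
lemma Y00 : Ymat 0 0 = 2 := rfl
lemma Y01 : Ymat 0 1 = 0 := rfl
lemma Y10 : Ymat 1 0 = -1 := rfl
lemma Y11 : Ymat 1 1 = Real.sqrt 3 := rfl
lemma Y20 : Ymat 2 0 = -1 := rfl
lemma Y21 : Ymat 2 1 = -Real.sqrt 3 := rfl

lemma d201 : distMat 2 Ymat 0 1 = Real.sqrt 12 := by
  rw [dist2, Y00, Y01, Y10, Y11]; congr 1; nlinarith [s3]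
lemma d202 : distMat 2 Ymat 0 2 = Real.sqrt 12 := by
  rw [dist2, Y00, Y01, Y20, Y21]; congr 1; nlinarith [s3]
lemma d210 : distMat 2 Ymat 1 0 = Real.sqrt 12 := by
  rw [dist2, Y00, Y01, Y10, Y11]; congr 1; nlinarith [s3]
lemma d212 : distMat 2 Ymat 1 2 = Real.sqrt 12 := by
  rw [dist2, Y10, Y11, Y20, Y21]; congr 1; nlinarith [s3]
lemma d220 : distMat 2 Ymat 2 0 = Real.sqrt 12 := by
  rw [dist2, Y00, Y01, Y20, Y21]; congr 1; nlinarith [s3]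
lemma d221 : distMat 2 Ymat 2 1 = Real.sqrt 12 := by
  rw [dist2, Y10, Y11, Y20, Y21]; congr 1; nlinarith [s3]

lemma d2const (i j : Fin 3) (h : i ≠ j) : distMat 2 Ymat i j = Real.sqrt 12 := by
  fin_cases i <;> fin_cases j <;>
    first
      | exact absurd rfl h
      | exact d201 | exact d202 | exact d210 | exact d212 | exact d220 | exact d221


lemma near2 (i : Fin 3) : nearSet 2 Ymat i = {j | j ≠ i} := by
  ext j
  simp only [nearSet, Set.mem_setOf_eq, and_iff_left_iff_imp]
  intro hj j' hj'
  rw [d2const i j (Ne.symm hj), d2const i j' (Ne.symm hj')]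

lemma sqrt3_lt : Real.sqrt 3 < 3 := by nlinarith [s3, s3nn]

lemma d101 : distMat 1 Ymat 0 1 = 3 + Real.sqrt 3 := by
  rw [dist1, Y00, Y01, Y10, Y11]
  rw [abs_of_nonpos (by norm_num), abs_of_nonneg (by simpa using s3nn)]; ring
lemma d102 : distMat 1 Ymat 0 2 = 3 + Real.sqrt 3 := by
  rw [dist1, Y00, Y01, Y20, Y21]
  rw [abs_of_nonpos (by norm_num), abs_of_nonpos (by simpa using s3nn)]; ring
lemma d110 : distMat 1 Ymat 1 0 = 3 + Real.sqrt 3 := by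
  rw [dist1, Y00, Y01, Y10, Y11]
  rw [abs_of_nonneg (by norm_num), abs_of_nonpos (by simpa using s3nn)]; ring
lemma d112 : distMat 1 Ymat 1 2 = 2 * Real.sqrt 3 := by
  rw [dist1, Y10, Y11, Y20, Y21]
  rw [show (-1 : ℝ) - -1 = 0 by ring, abs_zero,
    abs_of_nonpos (by simpa using neg_nonpos_of_nonneg (by nlinarith [s3nn]))]; ring
lemma d120 : distMat 1 Ymat 2 0 = 3 + Real.sqrt 3 := by
  rw [dist1, Y00, Y01, Y20, Y21]
  rw [abs_of_nonneg (by norm_num), abs_of_nonneg (by simpa using s3nn)]; ring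
lemma d121 : distMat 1 Ymat 2 1 = 2 * Real.sqrt 3 := by
  rw [dist1, Y10, Y11, Y20, Y21]
  rw [show (-1 : ℝ) - -1 = 0 by ring, abs_zero,
    abs_of_nonneg (by nlinarith [s3nn])]; ring

lemma near1zero : nearSet 1 Ymat 0 = {j | j ≠ 0} := by
  ext j
  simp only [nearSet, Set.mem_setOf_eq, and_iff_left_iff_imp]
  intro hj j' hj'
  have hd : ∀ m : Fin 3, m ≠ 0 → distMat 1 Ymat 0 m = 3 + Real.sqrt 3 := by
    intro m hm
    fin_cases m
    · exact absurd rfl hm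
    · exact d101
    · exact d102
  rw [hd j hj, hd j' hj']

/-- For the equilateral-triangle matrix `Y`, exactly one row has the same
`N₁`- and `N₂`-nearest-neighbor set, so `CORD(1,2,Y) = 1/3`. -/
theorem stmt_15 :
    {i : Fin 3 |
        nearSet 1 (![![2, 0], ![-1, Real.sqrt 3], ![-1, -Real.sqrt 3]] : Fin 3 → Fin 2 → ℝ) i =
        nearSet 2 (![![2, 0], ![-1, Real.sqrt 3], ![-1, -Real.sqrt 3]] : Fin 3 → Fin 2 → ℝ) i}.ncard
      = 1 ∧
    (({i : Fin 3 |
        nearSet 1 (![![2, 0], ![-1, Real.sqrt 3], ![-1, -Real.sqrt 3]] : Fin 3 → Fin 2 → ℝ) i =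
        nearSet 2 (![![2, 0], ![-1, Real.sqrt 3], ![-1, -Real.sqrt 3]] : Fin 3 → Fin 2 → ℝ) i}.ncard
      : ℝ) / 3 = 1 / 3) := by
  have key : {i : Fin 3 | nearSet 1 Ymat i = nearSet 2 Ymat i} = {0} := by
    ext i
    simp only [Set.mem_setOf_eq, Set.mem_singleton_iff]
    constructor
    · intro h
      by_contra hi
      have h0 : (0 : Fin 3) ∈ nearSet 2 Ymat i := by
        rw [near2]; exact fun hc => hi hc.symm
      rw [← h] at h0
      obtain ⟨-, hall⟩ := h0
      have hcases : i = 0 ∨ i = 1 ∨ i = 2 := by omega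
      rcases hcases with rfl | rfl | rfl
      · exact hi rfl
      · have := hall 2 (by decide)
        rw [d110, d112] at this
        nlinarith [sqrt3_lt, s3nn]
      · have := hall 1 (by decide)
        rw [d120, d121] at this
        nlinarith [sqrt3_lt, s3nn]
    · rintro rfl
      rw [near1zero, near2]
  have hcard : {i : Fin 3 | nearSet 1 Ymat i = nearSet 2 Ymat i}.ncard = 1 := by
    rw [key]; exact Set.ncard_singleton 0
  exact ⟨hcard, by rw [show ({i : Fin 3 |
        nearSet 1 (![![2, 0], ![-1, Real.sqrt 3], ![-1, -Real.sqrt 3]] : Fin 3 → Fin 2 → ℝ) i =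
        nearSet 2 (![![2, 0], ![-1, Real.sqrt 3], ![-1, -Real.sqrt 3]] : Fin 3 → Fin 2 → ℝ) i}.ncard) = 1 from hcard]; norm_num⟩
end
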